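/- Closedness fails under projection: there exist generators G₁, G₂, G_k and a language K = {a₁a₂a, a₂a₁a} over E₁ = {a₁,a}, E₂ = {a₂,a}, E_k = {a} such that, with L_m(G₁) = {a₁a}, L_m(G₂) = {a₂a}, L_m(G_k) = {ε, a}, the language K is L_m(G)-closed for G = G₁∥G₂∥G_k (i.e., K = \overline{K} ∩ L_m(G)), yet P_k(K) = {a} is not L_m(G_k)-closed (since \overline{P_k(K)} ∩ L_m(G_k) = {ε, a} ≠ {a}). -/

import Mathlib

open scoped Classical

/-- Natural projection: erase letters not in `A`. -/
noncomputable def proj {Ev : Type*} (A : Set Ev) (w : List Ev) : List Ev :=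
  w.filter (fun a => decide (a ∈ A))

/-- Projection of a language. -/
noncomputable def projL {Ev : Type*} (A : Set Ev) (L : Set (List Ev)) : Set (List Ev) :=
  proj A '' L

/-- Words over an alphabet `A`, i.e., `A*`. -/
def star {Ev : Type*} (A : Set Ev) : Set (List Ev) := {w | ∀ a ∈ w, a ∈ A}

/-- Synchronous product of `L₁ ⊆ A*` and `L₂ ⊆ B*`. -/
noncomputable def sync {Ev : Type*} (A B : Set Ev) (L1 L2 : Set (List Ev)) :
    Set (List Ev) :=
  {w | w ∈ star (A ∪ B) ∧ proj A w ∈ L1 ∧ proj B w ∈ L2}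

/-- Prefix closure of a language. -/
def prefixCl {Ev : Type*} (L : Set (List Ev)) : Set (List Ev) := {w | ∃ v, w ++ v ∈ L}

/-- Controllability of `K` with respect to (prefix-closed) `L` and uncontrollable events `Eu`. -/
def controllable {Ev : Type*} (K L : Set (List Ev)) (Eu : Set Ev) : Prop :=
  ∀ s ∈ prefixCl K, ∀ u ∈ Eu, s ++ [u] ∈ L → s ++ [u] ∈ prefixCl K

/-- Supremal controllable sublanguage of `K` w.r.t. `N` and `U`. -/
noncomputable def supC {Ev : Type*} (K N : Set (List Ev)) (U : Set Ev) : Set (List Ev) :=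
  ⋃₀ {M | M ⊆ K ∧ controllable M N U}

/-- `proj A` is an `L`-observer. -/
def observer {Ev : Type*} (A : Set Ev) (L : Set (List Ev)) : Prop :=
  ∀ t ∈ projL A L, ∀ s ∈ prefixCl L, proj A s <+: t →
    ∃ u, s ++ u ∈ L ∧ proj A (s ++ u) = t

/-- `proj A` is locally control consistent (LCC) for `L` (w.r.t. uncontrollable events `Eu`). -/
def lcc {Ev : Type*} (A Eu : Set Ev) (L : Set (List Ev)) : Prop :=
  ∀ s ∈ L, ∀ σ ∈ A ∩ Eu, proj A s ++ [σ] ∈ projL A L →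
    (∃ u, (∀ a ∈ u, a ∉ A) ∧ s ++ u ++ [σ] ∈ L) →
    ∃ u, (∀ a ∈ u, a ∈ Eu ∧ a ∉ A) ∧ s ++ u ++ [σ] ∈ L

/-- Events for the counterexample of STATEMENT 17. -/
inductive Ev17 where
  | a1 | a2 | a
deriving DecidableEq

/-!
Every event lies in `E₁ ∪ E₂`, so a word of `L_m(G)` is an interleaving of its projections `a₁a`
and `a₂a` in which the shared event `a` occurs once; the only such words are `a₁a₂a` and `a₂a₁a`.
Hence `L_m(G) = K`, which makes `K` trivially `L_m(G)`-closed. The projection `{a}` of `K` is not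
closed in `{ε, a}`, because its prefix `ε` is marked in `G_k`.
-/

section Projection

variable {Ev : Type*}

@[simp]
theorem proj_nil (A : Set Ev) : proj A [] = [] := rfl

theorem proj_cons (A : Set Ev) (x : Ev) (w : List Ev) :
    proj A (x :: w) = if x ∈ A then x :: proj A w else proj A w := by
  by_cases h : x ∈ A <;> simp [proj, h]

theorem proj_proj_of_subset {A B : Set Ev} (h : A ⊆ B) (w : List Ev) :
    proj A (proj B w) = proj A w := by
  simp only [proj, List.filter_filter]
  congr 1
  funext x
  by_cases hx : x ∈ A
  · simp [hx, h hx]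
  · simp [hx]

theorem proj_mem_star (A : Set Ev) (w : List Ev) : proj A w ∈ star A := by
  intro x hx
  simpa [proj] using (List.mem_filter.mp hx).2

theorem eq_nil_of_proj_eq_nil {A B : Set Ev} {w : List Ev} (hw : w ∈ star (A ∪ B))
    (hA : proj A w = []) (hB : proj B w = []) : w = [] := by
  rw [proj, List.filter_eq_nil_iff] at hA hB
  rw [List.eq_nil_iff_forall_not_mem]
  intro x hx
  rcases hw x hx with h | h
  · exact hA x hx (by simpa using h)
  · exact hB x hx (by simpa using h)

theorem mem_sync_union_sync_iff {A B C : Set Ev} {L₁ L₂ L₃ : Set (List Ev)} {w : List Ev} :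
    w ∈ sync A (B ∪ C) L₁ (sync B C L₂ L₃) ↔
      w ∈ star (A ∪ B ∪ C) ∧ proj A w ∈ L₁ ∧ proj B w ∈ L₂ ∧ proj C w ∈ L₃ := by
  simp only [sync, Set.mem_ofPred_eq, proj_proj_of_subset Set.subset_union_left,
    proj_proj_of_subset Set.subset_union_right, Set.union_assoc]
  exact ⟨fun ⟨hw, h₁, _, h₂, h₃⟩ ↦ ⟨hw, h₁, h₂, h₃⟩,
    fun ⟨hw, h₁, h₂, h₃⟩ ↦ ⟨hw, h₁, proj_mem_star _ w, h₂, h₃⟩⟩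

end Projection

theorem subset_prefixCl {Ev : Type*} (L : Set (List Ev)) : L ⊆ prefixCl L :=
  fun w hw ↦ ⟨[], by simpa using hw⟩

open Ev17 in
theorem eq_of_proj_eq {w : List Ev17} (h₁ : proj {a1, a} w = [a1, a])
    (h₂ : proj {a2, a} w = [a2, a]) : w = [a1, a2, a] ∨ w = [a2, a1, a] := by
  rcases w with _ | ⟨x, _ | ⟨y, _ | ⟨z, t⟩⟩⟩
  all_goals (try cases x) <;> (try cases y) <;> (try cases z) <;>
    simp [proj_cons] at h₁ h₂ ⊢
  all_goals exact eq_nil_of_proj_eq_nil (fun x _ ↦ by cases x <;> simp) h₁ h₂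

open Ev17 in
/-- closedness fails under projection. -/
theorem stmt17 :
    let E1 : Set Ev17 := {a1, a}
    let E2 : Set Ev17 := {a2, a}
    let Ek : Set Ev17 := {a}
    let LmG : Set (List Ev17) :=
      sync E1 (E2 ∪ Ek) {[a1, a]} (sync E2 Ek {[a2, a]} {[], [a]})
    let K : Set (List Ev17) := {[a1, a2, a], [a2, a1, a]}
    LmG = K ∧
    K = prefixCl K ∩ LmG ∧
    projL Ek K = {[a]} ∧
    prefixCl (projL Ek K) ∩ ({[], [a]} : Set (List Ev17)) = {[], [a]} ∧
    projL Ek K ≠ prefixCl (projL Ek K) ∩ ({[], [a]} : Set (List Ev17)) := by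
  intro E1 E2 Ek LmG K
  have hLmG : LmG = K := by
    ext w
    simp only [LmG, mem_sync_union_sync_iff]
    constructor
    · rintro ⟨-, h₁, h₂, -⟩
      exact eq_of_proj_eq h₁ h₂
    · rintro (rfl | rfl) <;> simp [_root_.star, proj_cons, E1, E2, Ek]
  have hproj : projL Ek K = {[a]} := by simp [projL, K, Ek, Set.image_pair, proj_cons]
  have hclosure : prefixCl {[a]} ∩ {[], [a]} = ({[], [a]} : Set (List Ev17)) :=
    Set.inter_eq_right.mpr (by rintro w (rfl | rfl); exacts [⟨[a], rfl⟩, ⟨[], rfl⟩])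
  refine ⟨hLmG, ?_, hproj, by rw [hproj, hclosure], ?_⟩
  · rw [hLmG]
    exact (Set.inter_eq_right.mpr (subset_prefixCl K)).symm
  · rw [hproj, hclosure]
    simp [Set.ext_iff]
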